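/- Let K ⊆ ℂ be a subfield closed under complex conjugation, λ > 0 real with λ ≠ 1, φ ∈ (-π, π]. If λ ∈ K and λe^{iφ} + λ⁻¹e^{iφ} + e^{-2iφ} ∈ K, then all three eigenvalues λe^{iφ}, e^{-2iφ}, λ⁻¹e^{iφ} belong to K. -/

import Mathlib

/-!
Write `a = exp (iφ)` and `μ = λ + λ⁻¹ ∈ K`, so that the trace is `T = μ a + a⁻²`; since `|a| = 1`,
its conjugate `T' = μ a⁻¹ + a²` lies in `K` as well. Then `a` is a common root of the two quadratics
`T x² - μ T' x + (μ² - 1)` and `(μ² - 1) x² - μ T x + T'` over `K`; eliminating `x²` leaves the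
linear equation `μ (T² - (μ² - 1) T') a = T T' - (μ² - 1)²`. Its leading coefficient is nonzero
because `0 < |T| ≤ μ + 1 < μ² - 1` for `μ > 2`, so `a ∈ K`, and with it all three eigenvalues.
-/

open Real Complex

section Elimination

variable {F : Type*} [Field F]

theorem mul_trace_sq_sub_mul_eq (a μ : F) (ha : a ≠ 0) :
    μ * ((μ * a + a⁻¹ ^ 2) ^ 2 - (μ ^ 2 - 1) * (μ * a⁻¹ + a ^ 2)) * a =
      (μ * a + a⁻¹ ^ 2) * (μ * a⁻¹ + a ^ 2) - (μ ^ 2 - 1) ^ 2 := by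
  field_simp
  ring

theorem Subfield.mem_of_trace_mem (K : Subfield F) {a μ : F} (ha : a ≠ 0) (hμ : μ ≠ 0)
    (hD : (μ * a + a⁻¹ ^ 2) ^ 2 ≠ (μ ^ 2 - 1) * (μ * a⁻¹ + a ^ 2))
    (hμK : μ ∈ K) (hTK : μ * a + a⁻¹ ^ 2 ∈ K) (hT'K : μ * a⁻¹ + a ^ 2 ∈ K) : a ∈ K := by
  have hD' := mul_ne_zero hμ (sub_ne_zero.mpr hD)
  rw [← inv_mul_cancel_left₀ hD' a, mul_trace_sq_sub_mul_eq a μ ha]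
  have hcK : μ ^ 2 - 1 ∈ K := K.sub_mem (K.pow_mem hμK 2) K.one_mem
  exact K.mul_mem
    (K.inv_mem (K.mul_mem hμK (K.sub_mem (K.pow_mem hTK 2) (K.mul_mem hcK hT'K))))
    (K.sub_mem (K.mul_mem hTK hT'K) (K.pow_mem hcK 2))

end Elimination

section UnitCircle

variable {a : ℂ} {μ : ℝ}

theorem Complex.sq_ne_mul_conj_of_norm_lt {z : ℂ} {c : ℝ} (hz : z ≠ 0) (hc : ‖z‖ < c) :
    z ^ 2 ≠ c * starRingEnd ℂ z := by
  intro h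
  have hnorm := congrArg norm h
  rw [norm_pow, norm_mul, Complex.norm_conj, Complex.norm_real, Real.norm_of_nonneg
    ((norm_nonneg z).trans hc.le), sq] at hnorm
  exact hc.ne (mul_right_cancel₀ (norm_ne_zero_iff.mpr hz) hnorm)

theorem conj_trace_of_norm_eq_one (ha : ‖a‖ = 1) :
    starRingEnd ℂ (μ * a + a⁻¹ ^ 2) = μ * a⁻¹ + a ^ 2 := by
  rw [Complex.inv_eq_conj ha]
  simp

theorem trace_ne_zero_of_norm_eq_one (ha : ‖a‖ = 1) (hμ : 1 < μ) : (μ : ℂ) * a + a⁻¹ ^ 2 ≠ 0 := by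
  intro h
  have hnorm := congrArg norm (eq_neg_of_add_eq_zero_left h)
  rw [norm_neg, norm_mul, norm_pow, norm_inv, ha, Complex.norm_real,
    Real.norm_of_nonneg (by linarith)] at hnorm
  norm_num at hnorm
  linarith

theorem norm_trace_le_of_norm_eq_one (ha : ‖a‖ = 1) (hμ : 0 ≤ μ) :
    ‖(μ : ℂ) * a + a⁻¹ ^ 2‖ ≤ μ + 1 := by
  calc ‖(μ : ℂ) * a + a⁻¹ ^ 2‖ ≤ ‖(μ : ℂ) * a‖ + ‖a⁻¹ ^ 2‖ := norm_add_le _ _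
    _ = μ + 1 := by
      rw [norm_mul, norm_pow, norm_inv, ha, Complex.norm_real, Real.norm_of_nonneg hμ]
      norm_num

theorem trace_sq_ne_of_norm_eq_one (ha : ‖a‖ = 1) (hμ : 2 < μ) :
    ((μ : ℂ) * a + a⁻¹ ^ 2) ^ 2 ≠ ((μ : ℂ) ^ 2 - 1) * ((μ : ℂ) * a⁻¹ + a ^ 2) := by
  rw [← conj_trace_of_norm_eq_one ha]
  have hc : ‖(μ : ℂ) * a + a⁻¹ ^ 2‖ < μ ^ 2 - 1 :=
    (norm_trace_le_of_norm_eq_one ha (by linarith)).trans_lt (by nlinarith)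
  exact_mod_cast Complex.sq_ne_mul_conj_of_norm_lt
    (trace_ne_zero_of_norm_eq_one ha (by linarith)) hc

theorem Subfield.mem_of_trace_mem_of_norm_eq_one (K : Subfield ℂ)
    (hK : ∀ z ∈ K, starRingEnd ℂ z ∈ K) (ha : ‖a‖ = 1) (hμ : 2 < μ) (hμK : (μ : ℂ) ∈ K)
    (hTK : (μ : ℂ) * a + a⁻¹ ^ 2 ∈ K) : a ∈ K :=
  K.mem_of_trace_mem (norm_ne_zero_iff.mp (ha ▸ one_ne_zero)) (ofReal_ne_zero.mpr (by linarith))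
    (trace_sq_ne_of_norm_eq_one ha hμ) hμK hTK (conj_trace_of_norm_eq_one ha ▸ hK _ hTK)

end UnitCircle

theorem two_lt_add_inv {x : ℝ} (hx : 0 < x) (hx1 : x ≠ 1) : 2 < x + x⁻¹ := by
  have hsq : 0 < (x - 1) ^ 2 := by positivity [sub_ne_zero.mpr hx1]
  have : x + x⁻¹ - 2 = (x - 1) ^ 2 / x := by field_simp; ring
  linarith [div_pos hsq hx]

theorem stmt_6_general (K : Subfield ℂ) (hK : ∀ z ∈ K, (starRingEnd ℂ) z ∈ K)
    (lam φ : ℝ) (hlam : 0 < lam) (hlam1 : lam ≠ 1)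
    (hlamK : (lam : ℂ) ∈ K)
    (htrK : (lam : ℂ) * Complex.exp (Complex.I * φ) +
      (lam : ℂ)⁻¹ * Complex.exp (Complex.I * φ) + Complex.exp (-2 * Complex.I * φ) ∈ K) :
    (lam : ℂ) * Complex.exp (Complex.I * φ) ∈ K ∧
      Complex.exp (-2 * Complex.I * φ) ∈ K ∧
      (lam : ℂ)⁻¹ * Complex.exp (Complex.I * φ) ∈ K := by
  set a := Complex.exp (Complex.I * φ)
  have hexp : Complex.exp (-2 * Complex.I * φ) = a⁻¹ ^ 2 := by
    rw [← Complex.exp_neg, ← Complex.exp_nat_mul]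
    ring_nf
  have hμK : ((lam + lam⁻¹ : ℝ) : ℂ) ∈ K := by
    push_cast
    exact K.add_mem hlamK (K.inv_mem hlamK)
  have hTK : ((lam + lam⁻¹ : ℝ) : ℂ) * a + a⁻¹ ^ 2 ∈ K := by
    rw [← hexp]
    push_cast
    rwa [add_mul]
  have haK : a ∈ K := K.mem_of_trace_mem_of_norm_eq_one hK (Complex.norm_exp_I_mul_ofReal φ)
    (two_lt_add_inv hlam hlam1) hμK hTK
  rw [hexp]
  exact ⟨K.mul_mem hlamK haK, K.pow_mem (K.inv_mem haK) 2, K.mul_mem (K.inv_mem hlamK) haK⟩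

theorem stmt_6 (K : Subfield ℂ) (hK : ∀ z ∈ K, (starRingEnd ℂ) z ∈ K)
    (lam φ : ℝ) (hlam : 0 < lam) (hlam1 : lam ≠ 1)
    (hφ : φ ∈ Set.Ioc (-π) π)
    (hlamK : (lam : ℂ) ∈ K)
    (htrK : (lam : ℂ) * Complex.exp (Complex.I * φ) +
      (lam : ℂ)⁻¹ * Complex.exp (Complex.I * φ) + Complex.exp (-2 * Complex.I * φ) ∈ K) :
    (lam : ℂ) * Complex.exp (Complex.I * φ) ∈ K ∧
      Complex.exp (-2 * Complex.I * φ) ∈ K ∧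
      (lam : ℂ)⁻¹ * Complex.exp (Complex.I * φ) ∈ K :=
  stmt_6_general K hK lam φ hlam hlam1 hlamK htrK
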